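/- arXiv:0810.5495 — 6 statements merged into one kernel-verified Lean document; each statement's English description precedes it below -/
import Mathlib

section
/- Let H̃ : ℂ² → ℂ be analytic near (0,0) with H̃(0,0)=0, ∂H̃/∂s(0,0)=0 and ∂H̃/∂θ(0,0)≠0. If for all (θ,s) near (0,0) with θ real and H̃(θ,s)=0 one has s real, then a contradiction follows; i.e., no such H̃ exists. -/
/-!
By the implicit function theorem, near the origin the zeros of `H` form a graph `θ = g s`
with `g` analytic, `g 0 = 0` and `g' 0 = 0`. Hence either `g ≡ 0` or `g s = s ^ n u s` with
`n ≥ 2` and `u 0 ≠ 0`. In the second case, as `s` runs over the upper half-disc the argument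
of `s ^ n` sweeps an interval of length `n π ≥ 2 π`, so `Im g` takes both signs there; by
connectedness it vanishes at some `s` with `Im s > 0`, giving a zero `(g s, s)` of `H` with
`g s` real and `s` not real.
-/

open Complex Filter Metric Set Topology
open scoped Real ContDiff

lemma ContinuousLinearMap.IsInvertible.of_apply_one_ne_zero {𝕜 : Type*}
    [NontriviallyNormedField 𝕜] {A : 𝕜 →L[𝕜] 𝕜} (hA : A 1 ≠ 0) : A.IsInvertible :=
  ⟨ContinuousLinearEquiv.unitsEquivAut 𝕜 (.mk0 _ hA), ext_ring (by simp)⟩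

section PartialDerivatives

variable {𝕜 F : Type*} [NontriviallyNormedField 𝕜] [NormedAddCommGroup F] [NormedSpace 𝕜 F]
  {f : 𝕜 × 𝕜 → F} {p : 𝕜 × 𝕜}

lemma fderiv_comp_inl_apply_one (hf : DifferentiableAt 𝕜 f p) :
    (fderiv 𝕜 f p ∘L .inl 𝕜 𝕜 𝕜) 1 = deriv (fun x => f (x, p.2)) p.1 :=
  (hf.hasFDerivAt.comp p.1 (hasFDerivAt_prodMk_left p.1 p.2)).hasDerivAt.deriv.symm

lemma fderiv_comp_inr_apply_one (hf : DifferentiableAt 𝕜 f p) :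
    (fderiv 𝕜 f p ∘L .inr 𝕜 𝕜 𝕜) 1 = deriv (fun y => f (p.1, y)) p.2 :=
  (hf.hasFDerivAt.comp p.2 (hasFDerivAt_prodMk_right p.1 p.2)).hasDerivAt.deriv.symm

end PartialDerivatives

lemma AnalyticAt.two_le_analyticOrderAt {𝕜 E : Type*} [NontriviallyNormedField 𝕜]
    [CharZero 𝕜] [NormedAddCommGroup E] [NormedSpace 𝕜 E] [CompleteSpace E]
    {g : 𝕜 → E} {x : 𝕜} (hg : AnalyticAt 𝕜 g x) (hg₀ : g x = 0)
    (hg₁ : deriv g x = 0) : 2 ≤ analyticOrderAt g x := by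
  rw [← Nat.cast_ofNat, natCast_le_analyticOrderAt_iff_iteratedDeriv_eq_zero hg]
  intro i hi
  interval_cases i <;> simpa

lemma exists_mem_Ioo_sin_add_pos (α : ℝ) : ∃ t ∈ Ioo 0 (2 * π), 0 < Real.sin (t + α) := by
  have ht := toIcoMod_mem_Ico' Real.two_pi_pos (π / 2 - α)
  have hsin : Real.sin (toIcoMod Real.two_pi_pos 0 (π / 2 - α) + α) = 1 := by
    rw [← self_sub_toIcoDiv_zsmul, sub_add_eq_add_sub, sub_add_cancel,
      Real.sin_periodic.sub_zsmul_eq, Real.sin_pi_div_two]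
  generalize toIcoMod Real.two_pi_pos 0 (π / 2 - α) = t at ht hsin
  rcases ht.1.eq_or_lt with rfl | hpos
  · have hα : Real.sin α = 1 := by rwa [zero_add] at hsin
    have hcos : Real.cos α = 0 := by nlinarith [Real.sin_sq_add_cos_sq α]
    refine ⟨π / 3, ⟨by positivity, by linarith [Real.pi_pos]⟩, ?_⟩
    rw [Real.sin_add, hα, hcos, Real.cos_pi_div_three]
    norm_num
  · exact ⟨t, ⟨hpos, ht.2⟩, hsin ▸ one_pos⟩

lemma exists_im_pos_im_pow_mul_pos {n : ℕ} (hn : 2 ≤ n) {a : ℂ} (ha : a ≠ 0) :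
    ∃ z : ℂ, 0 < z.im ∧ 0 < (z ^ n * a).im := by
  obtain ⟨t, ht, hsin⟩ := exists_mem_Ioo_sin_add_pos a.arg
  have hn' : (2 : ℝ) ≤ n := by exact_mod_cast hn
  refine ⟨exp ((t / n : ℝ) * I), ?_, ?_⟩
  · rw [exp_ofReal_mul_I_im]
    apply Real.sin_pos_of_pos_of_lt_pi (div_pos ht.1 (by positivity))
    rw [div_lt_iff₀ (by positivity)]
    nlinarith [ht.2, Real.pi_pos]
  · have hpow : exp ((t / n : ℝ) * I) ^ n = exp (t * I) := by
      have : (n : ℂ) ≠ 0 := by exact_mod_cast (by omega : n ≠ 0)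
      rw [← exp_nat_mul]
      congr 1
      push_cast
      field_simp
    have him : (exp (t * I) * a).im = ‖a‖ * Real.sin (t + a.arg) := by
      rw [mul_im, exp_ofReal_mul_I_re, exp_ofReal_mul_I_im, ← norm_mul_cos_arg,
        ← norm_mul_sin_arg, Real.sin_add]
      ring
    rw [hpow, him]
    exact mul_pos (norm_pos_iff.mpr ha) hsin

lemma frequently_im_pos_im_pow_mul_pos {n : ℕ} (hn : 2 ≤ n) {u : ℂ → ℂ}
    (hu : ContinuousAt u 0) (hu₀ : u 0 ≠ 0) :
    ∃ᶠ s in 𝓝 0, 0 < s.im ∧ 0 < (s ^ n * u s).im := by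
  obtain ⟨z, hz, hzu⟩ := exists_im_pos_im_pow_mul_pos hn hu₀
  have hray : Tendsto (fun ρ : ℝ => (ρ : ℂ) * z) (𝓝 0) (𝓝 0) :=
    (continuous_ofReal.mul continuous_const).tendsto' 0 0 (by simp)
  have hnear : ∀ᶠ ρ : ℝ in 𝓝 0, 0 < (z ^ n * u ((ρ : ℂ) * z)).im :=
    (continuous_im.continuousAt.tendsto.comp
      (tendsto_const_nhds.mul (hu.tendsto.comp hray))).eventually (lt_mem_nhds hzu)
  refine (hray.mono_left (nhdsWithin_le_nhds (s := Ioi 0))).frequently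
    (Eventually.frequently ?_)
  filter_upwards [nhdsWithin_le_nhds hnear, self_mem_nhdsWithin] with ρ hρu (hρ : 0 < ρ)
  rw [mul_pow, mul_assoc, ← ofReal_pow, im_ofReal_mul, im_ofReal_mul]
  exact ⟨mul_pos hρ hz, mul_pos (pow_pos hρ n) hρu⟩

theorem AnalyticAt.frequently_im_pos_im_eq_zero {g : ℂ → ℂ} (hg : AnalyticAt ℂ g 0)
    (hg₀ : g 0 = 0) (hg₁ : deriv g 0 = 0) : ∃ᶠ s in 𝓝 0, 0 < s.im ∧ (g s).im = 0 := by
  cases h : analyticOrderAt g 0 with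
  | top =>
    have hpos : ∃ᶠ s in 𝓝 (0 : ℂ), 0 < s.im :=
      mem_closure_iff_frequently.mp (by simp : (0 : ℂ) ∈ closure {s : ℂ | 0 < s.im})
    exact hpos.and_eventually ((analyticOrderAt_eq_top.mp h).mono fun s hs => by simp [hs])
  | coe n =>
    have hn : 2 ≤ n := by exact_mod_cast h ▸ hg.two_le_analyticOrderAt hg₀ hg₁
    obtain ⟨u, hu, hu₀, hgu⟩ := hg.analyticOrderAt_eq_natCast.mp h
    intro hev
    obtain ⟨δ, hδ, hball⟩ := eventually_nhds_iff_ball.mp <| hev.and <|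
      hgu.and <| hg.eventually_analyticAt.mono fun _ h => h.continuousAt
    obtain ⟨p, ⟨hp, hgp⟩, hpδ⟩ := ((frequently_im_pos_im_pow_mul_pos hn hu.continuousAt
      hu₀).and_eventually (ball_mem_nhds 0 hδ)).exists
    obtain ⟨q, ⟨hq, hgq⟩, hqδ⟩ := ((frequently_im_pos_im_pow_mul_pos hn hu.continuousAt.neg
      (neg_ne_zero.mpr hu₀)).and_eventually (ball_mem_nhds 0 hδ)).exists
    have hgp' : 0 < (g p).im := by rwa [(hball p hpδ).2.1, sub_zero, smul_eq_mul]
    have hgq' : (g q).im < 0 := by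
      rw [(hball q hqδ).2.1, sub_zero, smul_eq_mul]
      simpa only [Pi.neg_apply, mul_neg, neg_im, neg_pos] using hgq
    have hS : IsPreconnected (ball (0 : ℂ) δ ∩ {s | 0 < s.im}) :=
      ((convex_ball 0 δ).inter (convex_halfSpace_im_gt 0)).isPreconnected
    have hcont : ContinuousOn (fun s => (g s).im) (ball 0 δ ∩ {s | 0 < s.im}) :=
      fun s hs => (continuous_im.continuousAt.comp (hball s hs.1).2.2).continuousWithinAt
    obtain ⟨s, hs, hgs⟩ :=
      hS.intermediate_value ⟨hqδ, hq⟩ ⟨hpδ, hp⟩ hcont ⟨hgq'.le, hgp'.le⟩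
    exact (hball s hs.1).1 ⟨hs.2, hgs⟩

/-- There is no function H̃ : ℂ² → ℂ analytic near (0,0) with H̃(0,0)=0,
∂H̃/∂s(0,0)=0, ∂H̃/∂θ(0,0)≠0, such that for all (θ,s) near (0,0) with θ real and
H̃(θ,s)=0 one has s real. -/
theorem no_toral_with_vanishing_s_derivative (H : ℂ → ℂ → ℂ)
    (hH : AnalyticAt ℂ (fun p : ℂ × ℂ => H p.1 p.2) (0, 0))
    (h00 : H 0 0 = 0)
    (hs : deriv (fun s => H 0 s) 0 = 0)
    (hθ : deriv (fun θ => H θ 0) 0 ≠ 0)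
    (hreal : ∀ᶠ p : ℂ × ℂ in nhds (0, 0), p.1.im = 0 → H p.1 p.2 = 0 → p.2.im = 0) :
    False := by
  -- arguments swapped, since Mathlib's implicit function solves for the second coordinate
  set f : ℂ × ℂ → ℂ := fun p => H p.2 p.1
  have hf : ContDiffAt ℂ ω f (0, 0) :=
    (hH.comp_of_eq (analyticAt_snd.prod analyticAt_fst) rfl).contDiffAt
  have hfs : fderiv ℂ f (0, 0) ∘L .inl ℂ ℂ ℂ = 0 := ContinuousLinearMap.ext_ring <| by
    rw [fderiv_comp_inl_apply_one (hf.differentiableAt (by simp))]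
    exact hs
  have hfθ : (fderiv ℂ f (0, 0) ∘L .inr ℂ ℂ ℂ).IsInvertible :=
    .of_apply_one_ne_zero <| by
      rw [fderiv_comp_inr_apply_one (hf.differentiableAt (by simp))]
      exact hθ
  set g := hf.implicitFunction (by simp) hfθ
  have hg : AnalyticAt ℂ g 0 := (hf.contDiffAt_implicitFunction _ hfθ).analyticAt
  have hg₀ : g 0 = 0 := hf.implicitFunction_apply_self _ hfθ
  have hg₁ : deriv g 0 = 0 := by
    simpa [hfs] using
      (hf.hasStrictFDerivAt_implicitFunction (by simp) hfθ).hasFDerivAt.hasDerivAt.deriv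
  have hHg : ∀ᶠ s in 𝓝 0, H (g s) s = 0 := by
    simpa [f, h00] using hf.eventually_apply_implicitFunction (by simp) hfθ
  have hcurve : Tendsto (fun s => (g s, s)) (𝓝 0) (𝓝 (0, 0)) :=
    (hg₀ ▸ hg.continuousAt.tendsto).prodMk_nhds tendsto_id
  obtain ⟨s, ⟨hs_im, hgs_im⟩, hH_s, hreal_s⟩ := ((hg.frequently_im_pos_im_eq_zero hg₀
    hg₁).and_eventually (hHg.and (hcurve.eventually hreal))).exists
  exact hs_im.ne' (hreal_s hgs_im hH_s)
end

section
/- Let H be a polynomial in d+1 complex variables satisfying the torality condition: whenever (z₁,…,z_d) lies on the unit torus and H(z)=0, then |z_{d+1}|=1. If p is a point of V₁ = {H=0} ∩ (unit torus in ℂ^{d+1}) with ∇H(p) ≠ 0, then ∂H/∂z_{d+1}(p) ≠ 0. -/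
/-!
Suppose `∂H/∂z_{d+1}(p) = 0` while `∂H/∂z_i(p) ≠ 0` for some `i ≤ d`. Freeze every coordinate
other than `z_i` and `w = z_{d+1}` at `p`: the implicit function theorem solves `H = 0` near `p`
as `z_i = ψ(w)` with `ψ` analytic and `ψ'(p_{d+1}) = 0`. Hence either `ψ` is constant, or
`ψ(w) = p_i + (w - w₀)^k g(w)` with `k ≥ 2` and `g(w₀) ≠ 0`. Along the small arc
`w = w₀(1 + t e^{iφ})`, `|φ| ≤ π/2`, which lies outside the closed unit disc, the correction term
turns through the angle `kπ ≥ 2π`, so it points both outward and inward relative to `p_i` and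
`|ψ(w)| = 1` somewhere on the arc. This is a zero of `H` whose first `d` coordinates lie on the
torus but with `|z_{d+1}| > 1`, against torality.
-/

open Complex Filter Function Metric MvPolynomial Set Topology
open scoped ComplexConjugate ContDiff Real

theorem MvPolynomial.hasDerivAt_eval_update {𝕜 σ : Type*} [NontriviallyNormedField 𝕜]
    [DecidableEq σ] (P : MvPolynomial σ 𝕜) (z : σ → 𝕜) (i : σ) (t : 𝕜) :
    HasDerivAt (fun s => eval (update z i s) P) (eval (update z i t) (pderiv i P)) t := by
  induction P using MvPolynomial.induction_on with
  | C a => simpa using hasDerivAt_const t a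
  | add P Q hP hQ => simp only [map_add]; exact hP.add hQ
  | mul_X P j hP =>
    have hX : HasDerivAt (fun s => eval (update z i s) (X j))
        (eval (update z i t) (pderiv i (X j))) t := by
      rcases eq_or_ne j i with rfl | h
      · simpa [pderiv_X] using hasDerivAt_id' t
      · simpa [pderiv_X, h] using hasDerivAt_const t (z j)
    simp only [map_mul]
    refine (hP.fun_mul hX).congr_deriv ?_
    simp only [Derivation.leibniz, smul_eq_mul, map_add, map_mul]
    ring

theorem MvPolynomial.analyticAt_eval_update_update {𝕜 σ : Type*} [NontriviallyNormedField 𝕜]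
    [DecidableEq σ] (P : MvPolynomial σ 𝕜) (z : σ → 𝕜) (i j : σ) (v : 𝕜 × 𝕜) :
    AnalyticAt 𝕜 (fun v : 𝕜 × 𝕜 => eval (update (update z i v.1) j v.2) P) v := by
  refine AnalyticAt.aeval_mvPolynomial (fun l => ?_) P
  simp only [update_apply]
  split_ifs
  exacts [analyticAt_snd, analyticAt_fst, analyticAt_const]

theorem exists_analyticAt_implicitFunction {𝕜 : Type*} [RCLike 𝕜] {Φ : 𝕜 × 𝕜 → 𝕜}
    {a : 𝕜 × 𝕜} {c₁ c₂ : 𝕜} (hΦ : AnalyticAt 𝕜 Φ a)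
    (h₁ : HasDerivAt (fun w => Φ (w, a.2)) c₁ a.1) (h₂ : HasDerivAt (fun x => Φ (a.1, x)) c₂ a.2)
    (hc₂ : c₂ ≠ 0) :
    ∃ ψ : 𝕜 → 𝕜, AnalyticAt 𝕜 ψ a.1 ∧ ψ a.1 = a.2 ∧ HasDerivAt ψ (-c₁ / c₂) a.1 ∧
      ∀ᶠ w in 𝓝 a.1, Φ (w, ψ w) = Φ a := by
  have hd := hΦ.differentiableAt.hasFDerivAt
  have hinl : fderiv 𝕜 Φ a ∘L .inl 𝕜 𝕜 𝕜 = .toSpanSingleton 𝕜 c₁ :=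
    (hd.comp a.1 (hasFDerivAt_prodMk_left a.1 a.2)).unique h₁.hasFDerivAt
  have hinr : fderiv 𝕜 Φ a ∘L .inr 𝕜 𝕜 𝕜 =
      (ContinuousLinearEquiv.unitsEquivAut 𝕜 (Units.mk0 c₂ hc₂) : 𝕜 →L[𝕜] 𝕜) :=
    (hd.comp a.2 (hasFDerivAt_prodMk_right a.1 a.2)).unique h₂.hasFDerivAt |>.trans
      (ContinuousLinearMap.ext_ring (by simp))
  have hΦω : ContDiffAt 𝕜 ω Φ a := hΦ.contDiffAt
  have hinv : (fderiv 𝕜 Φ a ∘L .inr 𝕜 𝕜 𝕜).IsInvertible := hinr ▸ ⟨_, rfl⟩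
  refine ⟨hΦω.implicitFunction (by simp) hinv, (hΦω.contDiffAt_implicitFunction _ hinv).analyticAt,
    hΦω.implicitFunction_apply_self _ hinv, ?_, hΦω.eventually_apply_implicitFunction _ hinv⟩
  have := (hΦω.hasStrictFDerivAt_implicitFunction (by simp) hinv).hasStrictDerivAt.hasDerivAt
  rw [hinl, hinr, ContinuousLinearMap.inverse_equiv] at this
  refine this.congr_deriv ?_
  simp [div_eq_mul_inv]

theorem frequently_norm_lt_norm {E : Type*} [NormedAddCommGroup E] [NormedSpace ℝ E] {x : E}
    (hx : x ≠ 0) : ∃ᶠ y in 𝓝 x, ‖x‖ < ‖y‖ := by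
  have h : {y : E | ‖x‖ < ‖y‖} = (closedBall 0 ‖x‖)ᶜ := by ext; simp
  have hcl : x ∈ closure {y : E | ‖x‖ < ‖y‖} := by
    rw [h, closure_compl, interior_closedBall _ (norm_ne_zero_iff.mpr hx)]
    simp
  exact mem_closure_iff_frequently.mp hcl

theorem one_lt_norm_one_add {z : ℂ} (hz : z ≠ 0) (hre : 0 ≤ z.re) : 1 < ‖1 + z‖ := by
  have hz2 : 0 < z.re * z.re + z.im * z.im := by
    simpa [normSq_apply] using normSq_pos.mpr hz
  have h : 1 < ‖1 + z‖ ^ 2 := by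
    rw [Complex.sq_norm, normSq_apply]
    simp only [add_re, one_re, add_im, one_im, zero_add]
    nlinarith
  nlinarith [norm_nonneg (1 + z)]

theorem one_lt_norm_one_add_of_norm_sub_lt {q : ℂ} {s : ℝ} (hq : ‖q - s‖ < s) :
    1 < ‖1 + q‖ := by
  have h := abs_re_le_norm (q - s)
  simp only [sub_re, ofReal_re] at h
  have hre : 0 < q.re := by linarith [neg_abs_le (q.re - s)]
  exact one_lt_norm_one_add (fun h => by simp [h] at hre) hre.le

theorem norm_one_add_lt_one_of_norm_add_lt {q : ℂ} {s : ℝ} (hs : s ≤ 1) (hq : ‖q + s‖ < s) :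
    ‖1 + q‖ < 1 :=
  calc ‖1 + q‖ = ‖((1 - s : ℝ) : ℂ) + (q + s)‖ := by push_cast; ring_nf
    _ ≤ ‖((1 - s : ℝ) : ℂ)‖ + ‖q + s‖ := norm_add_le _ _
    _ < 1 := by rw [norm_real, Real.norm_of_nonneg (by linarith)]; linarith

theorem exists_norm_add_mul_eq_norm_one_add {c ζ y y₀ : ℂ} (hc : ‖c‖ = 1) (hζ : ζ ≠ 0)
    (hy : ‖y - y₀‖ < ‖y₀‖) :
    ∃ q, ‖c + ζ * y‖ = ‖1 + q‖ ∧ ‖q - conj c * ζ * y₀‖ < ‖ζ‖ * ‖y₀‖ := by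
  refine ⟨conj c * ζ * y, ?_, ?_⟩
  · have hcc : c * conj c = 1 := by rw [mul_conj, normSq_eq_norm_sq, hc]; simp
    rw [← one_mul ‖1 + _‖, ← hc, ← norm_mul]
    congr 1
    linear_combination (-(ζ * y)) * hcc
  · rw [← mul_sub, norm_mul, norm_mul, norm_conj, hc, one_mul]
    exact mul_lt_mul_of_pos_left hy (norm_pos_iff.mpr hζ)

theorem exists_exp_mul_eq_norm_and_neg_norm (a : ℂ) {k : ℕ} (hk : 2 ≤ k) :
    ∃ φ₁ ∈ Icc (-(π / 2)) (π / 2), ∃ φ₂ ∈ Icc (-(π / 2)) (π / 2),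
      exp ((k * φ₁ : ℝ) * I) * a = ‖a‖ ∧ exp ((k * φ₂ : ℝ) * I) * a = -‖a‖ := by
  have hk' : (2 : ℝ) ≤ k := by exact_mod_cast hk
  have hkpos : (0 : ℝ) < k := by linarith
  have hβ₁ := neg_pi_lt_arg a
  have hβ₂ := arg_le_pi a
  have hpi := Real.pi_pos
  have key : ∀ φ : ℝ, exp ((k * φ : ℝ) * I) * a = ‖a‖ * exp ((k * φ + arg a : ℝ) * I) := by
    intro φ
    conv_lhs => rw [← norm_mul_exp_arg_mul_I a]
    push_cast
    rw [add_mul, exp_add]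
    ring
  have hmem : ∀ θ : ℝ, |θ| ≤ π → θ / k ∈ Icc (-(π / 2)) (π / 2) := by
    intro θ hθ
    rw [abs_le] at hθ
    constructor
    · rw [le_div_iff₀ hkpos]; nlinarith
    · rw [div_le_iff₀ hkpos]; nlinarith
  have hkφ : ∀ θ : ℝ, (k : ℝ) * (θ / k) = θ := fun θ => by field_simp
  refine ⟨-arg a / k, hmem _ (by rw [abs_neg, abs_le]; constructor <;> linarith), ?_⟩
  obtain ⟨θ, hθ, hθe⟩ : ∃ θ : ℝ, |θ| ≤ π ∧ exp ((θ + arg a : ℝ) * I) = -1 := by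
    rcases lt_or_ge 0 (arg a) with h | h
    · exact ⟨π - arg a, by rw [abs_le]; constructor <;> linarith, by simp⟩
    · exact ⟨-π - arg a, by rw [abs_le]; constructor <;> linarith, by simp⟩
  refine ⟨θ / k, hmem θ hθ, ?_, ?_⟩
  · rw [key, hkφ]; simp
  · rw [key, hkφ, hθe]; ring

theorem exists_norm_eq_one_and_one_lt_norm_of_eq_add_pow_mul {u g : ℂ → ℂ} {c₀ w₀ : ℂ} {k : ℕ}
    {δ t : ℝ} (hk : 2 ≤ k) (hc₀ : ‖c₀‖ = 1) (hw₀ : ‖w₀‖ = 1)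
    (hu : ∀ w ∈ ball w₀ δ,
      ContinuousAt u w ∧ u w = c₀ + (w - w₀) ^ k * g w ∧ ‖g w - g w₀‖ < ‖g w₀‖)
    (ht : 0 < t) (htδ : t < δ) (htg : t ^ k * ‖g w₀‖ ≤ 1) :
    ∃ w, ‖w - w₀‖ = t ∧ ‖u w‖ = 1 ∧ 1 < ‖w‖ := by
  set a := conj c₀ * w₀ ^ k * g w₀
  have ha : ‖a‖ = ‖g w₀‖ := by simp [a, hc₀, hw₀]
  obtain ⟨φ₁, hφ₁, φ₂, hφ₂, h₁, h₂⟩ := exists_exp_mul_eq_norm_and_neg_norm a hk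
  set W : ℝ → ℂ := fun φ => w₀ * (1 + t * exp (φ * I))
  have hWsub : ∀ φ : ℝ, W φ - w₀ = t * w₀ * exp (φ * I) := fun φ => by ring
  have hWdist : ∀ φ : ℝ, ‖W φ - w₀‖ = t := fun φ => by
    rw [hWsub, norm_mul, norm_mul, hw₀, norm_exp_ofReal_mul_I, norm_real,
      Real.norm_of_nonneg ht.le, mul_one, mul_one]
  have hWball : ∀ φ, W φ ∈ ball w₀ δ := fun φ => by
    rwa [mem_ball, dist_eq_norm, hWdist]
  have hWnorm : ∀ φ ∈ Icc (-(π / 2)) (π / 2), 1 < ‖W φ‖ := fun φ hφ => by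
    rw [norm_mul, hw₀, one_mul]
    refine one_lt_norm_one_add (by simp [ht.ne']) ?_
    rw [re_ofReal_mul, exp_ofReal_mul_I_re]
    exact mul_nonneg ht.le (Real.cos_nonneg_of_mem_Icc hφ)
  have hcont : Continuous fun φ => ‖u (W φ)‖ :=
    continuous_iff_continuousAt.mpr fun φ => ((hu _ (hWball φ)).1.comp (by fun_prop)).norm
  have hpert : ∀ φ : ℝ, ∃ q, ‖u (W φ)‖ = ‖1 + q‖ ∧
      ‖q - t ^ k * (exp ((k * φ : ℝ) * I) * a)‖ < t ^ k * ‖a‖ := fun φ => by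
    obtain ⟨-, hfac, hg⟩ := hu _ (hWball φ)
    have hx : conj c₀ * (W φ - w₀) ^ k * g w₀ = t ^ k * (exp ((k * φ : ℝ) * I) * a) := by
      rw [hWsub, mul_pow, mul_pow, ← exp_nat_mul]; push_cast [a]; ring_nf
    rw [hfac, ← hx, ha, ← hWdist φ, ← norm_pow]
    refine exists_norm_add_mul_eq_norm_one_add hc₀ (pow_ne_zero _ ?_) hg
    rw [← norm_ne_zero_iff, hWdist]; exact ht.ne'
  have hF₁ : 1 < ‖u (W φ₁)‖ := by
    obtain ⟨q, hq, hqs⟩ := hpert φ₁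
    rw [h₁] at hqs
    rw [hq]
    exact one_lt_norm_one_add_of_norm_sub_lt (s := t ^ k * ‖a‖) (by push_cast; exact hqs)
  have hF₂ : ‖u (W φ₂)‖ < 1 := by
    obtain ⟨q, hq, hqs⟩ := hpert φ₂
    rw [h₂, mul_neg, sub_neg_eq_add] at hqs
    rw [hq]
    exact norm_one_add_lt_one_of_norm_add_lt (s := t ^ k * ‖a‖) (by rwa [ha])
      (by push_cast; exact hqs)
  obtain ⟨φ, hφ, hφu⟩ := intermediate_value_uIcc hcont.continuousOn
    (mem_uIcc.mpr (Or.inr ⟨hF₂.le, hF₁.le⟩))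
  exact ⟨W φ, hWdist φ, hφu, hWnorm φ (uIcc_subset_Icc hφ₁ hφ₂ hφ)⟩

theorem frequently_norm_eq_one_and_one_lt_norm_of_eq_add_pow_mul {u g : ℂ → ℂ} {c₀ w₀ : ℂ}
    {k : ℕ} (hk : 2 ≤ k) (hc₀ : ‖c₀‖ = 1) (hw₀ : ‖w₀‖ = 1) (hu : ∀ᶠ w in 𝓝 w₀, ContinuousAt u w)
    (hg : ContinuousAt g w₀) (hg₀ : g w₀ ≠ 0) (hfac : ∀ᶠ w in 𝓝 w₀, u w = c₀ + (w - w₀) ^ k * g w) :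
    ∃ᶠ w in 𝓝 w₀, ‖u w‖ = 1 ∧ 1 < ‖w‖ := by
  have hg' : ∀ᶠ w in 𝓝 w₀, ‖g w - g w₀‖ < ‖g w₀‖ :=
    (hg.eventually (ball_mem_nhds _ (norm_pos_iff.mpr hg₀))).mono fun _ => mem_ball_iff_norm.mp
  obtain ⟨δ, hδ, hball⟩ := eventually_nhds_iff_ball.mp (hu.and (hfac.and hg'))
  rw [nhds_basis_ball.frequently_iff]
  intro ε hε
  have hpow : Tendsto (fun t : ℝ => t ^ k * ‖g w₀‖) (𝓝 0) (𝓝 0) :=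
    (by fun_prop : Continuous fun t : ℝ => t ^ k * ‖g w₀‖).tendsto' 0 0 (by simp; omega)
  have hsmall : ∀ᶠ t in 𝓝[>] (0 : ℝ), t < min δ ε ∧ t ^ k * ‖g w₀‖ ≤ 1 :=
    nhdsWithin_le_nhds ((eventually_lt_nhds (lt_min hδ hε)).and (hpow.eventually_le_const one_pos))
  obtain ⟨t, ⟨htδε, htg⟩, ht⟩ := (hsmall.and self_mem_nhdsWithin).exists
  obtain ⟨w, hwt, hw⟩ := exists_norm_eq_one_and_one_lt_norm_of_eq_add_pow_mul hk hc₀ hw₀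
    hball ht (htδε.trans_le (min_le_left _ _)) htg
  exact ⟨w, by rw [mem_ball, dist_eq_norm, hwt]; exact htδε.trans_le (min_le_right _ _), hw⟩

theorem AnalyticAt.frequently_norm_eq_one_and_one_lt_norm {u : ℂ → ℂ} {w₀ : ℂ}
    (hu : AnalyticAt ℂ u w₀) (hu' : HasDerivAt u 0 w₀) (hw₀ : ‖w₀‖ = 1) (hu₀ : ‖u w₀‖ = 1) :
    ∃ᶠ w in 𝓝 w₀, ‖u w‖ = 1 ∧ 1 < ‖w‖ := by
  have hord : 2 ≤ analyticOrderAt (u · - u w₀) w₀ := by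
    rw [← hu.analyticOrderAt_deriv_add_one]
    have : analyticOrderAt (deriv u) w₀ ≠ 0 := by
      rw [ne_eq, hu.deriv.analyticOrderAt_eq_zero]
      simpa using hu'.deriv
    calc (2 : ℕ∞) = 1 + 1 := by norm_num
      _ ≤ _ := by gcongr; exact Order.one_le_iff_ne_zero.mpr this
  cases h : analyticOrderAt (u · - u w₀) w₀ with
  | top =>
    have hw₀' : w₀ ≠ 0 := norm_ne_zero_iff.mp (hw₀.trans_ne one_ne_zero)
    refine ((frequently_norm_lt_norm hw₀').and_eventually (analyticOrderAt_eq_top.mp h)).mono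
      fun w ⟨hw, hw'⟩ => ⟨?_, hw₀ ▸ hw⟩
    rwa [sub_eq_zero.mp hw']
  | coe k =>
    obtain ⟨g, hg, hg₀, hfac⟩ := (hu.sub analyticAt_const).analyticOrderAt_eq_natCast.mp h
    refine frequently_norm_eq_one_and_one_lt_norm_of_eq_add_pow_mul (by exact_mod_cast h ▸ hord)
      hu₀ hw₀ (hu.eventually_analyticAt.mono fun _ h => h.continuousAt) hg.continuousAt hg₀ ?_
    filter_upwards [hfac] with w hw
    simp only [Pi.sub_apply, smul_eq_mul] at hw
    linear_combination hw

/-- If H is a polynomial in d+1 variables satisfying torality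
(whenever the first d coordinates lie on the unit torus and H(z)=0, then |z_{d+1}|=1),
and p is a point of V₁ = {H=0} ∩ (unit torus) with ∇H(p) ≠ 0, then
∂H/∂z_{d+1}(p) ≠ 0. -/
theorem torality_forces_last_partial_nonzero (d : ℕ) (H : MvPolynomial (Fin (d + 1)) ℂ)
    (htoral : ∀ z : Fin (d + 1) → ℂ, (∀ i : Fin d, ‖z i.castSucc‖ = 1) →
      eval z H = 0 → ‖z (Fin.last d)‖ = 1)
    (p : Fin (d + 1) → ℂ) (hp : ∀ i, ‖p i‖ = 1) (hpH : eval p H = 0)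
    (hgrad : ∃ i, eval p (pderiv i H) ≠ 0) :
    eval p (pderiv (Fin.last d) H) ≠ 0 := by
  intro hlast
  obtain ⟨i, hi⟩ := hgrad
  have hil : i ≠ Fin.last d := by rintro rfl; exact hi hlast
  set slice : ℂ × ℂ → Fin (d + 1) → ℂ := fun v => update (update p (Fin.last d) v.1) i v.2
  have h₁ : ∀ w, slice (w, p i) = update p (Fin.last d) w := fun w =>
    update_eq_self_iff.mpr (update_of_ne hil _ _).symm
  have h₂ : ∀ x, slice (p (Fin.last d), x) = update p i x := fun x => by simp [slice]
  obtain ⟨ψ, hψ, hψ₀, hψ', hψH⟩ := exists_analyticAt_implicitFunction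
    (Φ := fun v => eval (slice v) H) (a := (p (Fin.last d), p i))
    (H.analyticAt_eval_update_update p _ _ _)
    (by simpa [h₁] using H.hasDerivAt_eval_update p (Fin.last d) (p (Fin.last d)))
    (by simpa [h₂] using H.hasDerivAt_eval_update p i (p i)) hi
  rw [hlast, neg_zero, zero_div] at hψ'
  obtain ⟨w, ⟨hψw, hw⟩, hHw⟩ := ((hψ.frequently_norm_eq_one_and_one_lt_norm hψ' (hp _)
    (hψ₀ ▸ hp i)).and_eventually hψH).exists
  have htorus : ∀ j : Fin d, ‖slice (w, ψ w) j.castSucc‖ = 1 := fun j => by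
    rcases eq_or_ne j.castSucc i with h | h
    · simp [slice, h, hψw]
    · simp [slice, h, (Fin.castSucc_lt_last j).ne, hp]
  have := htoral _ htorus (by simpa [h₂, hpH] using hHw)
  simp [slice, hil.symm] at this
  linarith
end

section
/- Let F(z) = ∑_r a_r z^r be a Laurent series in d+1 variables converging on Log^{-1}(B₀) for an open convex set B₀ ⊆ ℝ^{d+1}, with F bounded on each torus Log^{-1}({u}), u ∈ B₀. Fix a direction r ∈ ℝ^{d+1} and let λ' < sup{ r̂·x : x ∈ B₀ }. Then |a_{r'}| = o(exp(−λ'|r'|)) uniformly as r' → ∞ in some open cone containing r. -/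
open scoped RealInnerProductSpace
open MeasureTheory Filter Topology

/-!
A single point `x ∈ B` with `r̂·x > λ'` suffices. Cauchy's formula on the torus `Log⁻¹{x}`
gives the estimate `|a_{r'}| ≤ C exp(-r'·x)`, where `C` bounds `F` on that torus. Pick `μ` with
`λ' < μ < r̂·x`; the open cone `{v | μ|v| < v·x}` contains `r`, and on it
`C exp(-r'·x) ≤ C exp(-(μ - λ')|r'|) exp(-λ'|r'|)`, whose first factor tends to `0`.
-/

section Torus

variable {ι : Type*} [Fintype ι]

lemma volume_pi_Ioc_two_pi :
    volume (Set.univ.pi fun _ : ι => Set.Ioc (0 : ℝ) (2 * Real.pi)) =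
      ENNReal.ofReal ((2 * Real.pi) ^ Fintype.card ι) := by
  simp [volume_pi_pi, Real.volume_Ioc, ENNReal.ofReal_pow Real.two_pi_pos.le]

lemma norm_exp_neg_I_mul_sum_intCast_mul (r : ι → ℤ) (y : ι → ℝ) :
    ‖Complex.exp (-Complex.I * ∑ i, (r i : ℂ) * (y i : ℂ))‖ = 1 := by
  have : -Complex.I * ∑ i, (r i : ℂ) * (y i : ℂ) =
      ((-∑ i, (r i : ℝ) * y i : ℝ) : ℂ) * Complex.I := by
    push_cast; ring
  rw [this, Complex.norm_exp_ofReal_mul_I]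

lemma norm_setIntegral_torus_le {G : (ι → ℝ) → ℂ} {C : ℝ} (hG : ∀ y, ‖G y‖ ≤ C) (r : ι → ℤ) :
    ‖∫ y in Set.univ.pi fun _ : ι => Set.Ioc (0 : ℝ) (2 * Real.pi),
        Complex.exp (-Complex.I * ∑ i, (r i : ℂ) * (y i : ℂ)) * G y‖ ≤
      C * (2 * Real.pi) ^ Fintype.card ι := by
  have hvol := volume_pi_Ioc_two_pi (ι := ι)
  calc _ ≤ C * volume.real (Set.univ.pi fun _ : ι => Set.Ioc (0 : ℝ) (2 * Real.pi)) := by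
        refine norm_setIntegral_le_of_norm_le_const (by simp [hvol]) fun y _ => ?_
        rw [norm_mul, norm_exp_neg_I_mul_sum_intCast_mul, one_mul]
        exact hG y
    _ = C * (2 * Real.pi) ^ Fintype.card ι := by
        rw [measureReal_def, hvol, ENNReal.toReal_ofReal (by positivity)]

lemma norm_le_of_eq_cauchy_integral {F : (ι → ℂ) → ℂ} {a : ℂ} {u : ι → ℝ} {C : ℝ}
    (r : ι → ℤ)
    (hF : ∀ y : ι → ℝ, ‖F (fun i => Complex.exp ((u i : ℂ) + Complex.I * (y i : ℂ)))‖ ≤ C)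
    (ha : a = (2 * Real.pi : ℂ) ^ (-(Fintype.card ι : ℤ)) *
        Complex.exp (-(∑ i, (r i : ℂ) * (u i : ℂ))) *
        ∫ y in Set.univ.pi fun _ : ι => Set.Ioc (0 : ℝ) (2 * Real.pi),
          Complex.exp (-Complex.I * ∑ i, (r i : ℂ) * (y i : ℂ)) *
            F (fun i => Complex.exp ((u i : ℂ) + Complex.I * (y i : ℂ)))) :
    ‖a‖ ≤ C * Real.exp (-∑ i, (r i : ℝ) * u i) := by
  have hexp : ‖Complex.exp (-(∑ i, (r i : ℂ) * (u i : ℂ)))‖ = Real.exp (-∑ i, (r i : ℝ) * u i) := by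
    rw [Complex.norm_exp]; simp
  have hpi : ‖(2 * Real.pi : ℂ) ^ (-(Fintype.card ι : ℤ))‖ = ((2 * Real.pi) ^ Fintype.card ι)⁻¹ := by
    rw [norm_zpow]; simp [abs_of_pos Real.pi_pos]
  rw [ha, norm_mul, norm_mul, hexp, hpi]
  calc _ ≤ ((2 * Real.pi) ^ Fintype.card ι)⁻¹ * Real.exp (-∑ i, (r i : ℝ) * u i) *
        (C * (2 * Real.pi) ^ Fintype.card ι) := by
        gcongr; exact norm_setIntegral_torus_le hF r
    _ = C * Real.exp (-∑ i, (r i : ℝ) * u i) := by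
        field_simp

end Torus

section Cone

variable {E : Type*} [NormedAddCommGroup E] [InnerProductSpace ℝ E]

def decayCone (x : E) (μ : ℝ) : Set E := {v | μ * ‖v‖ < ⟪v, x⟫}

lemma isOpen_decayCone (x : E) (μ : ℝ) : IsOpen (decayCone x μ) :=
  isOpen_lt (continuous_const.mul continuous_norm) (continuous_id.inner continuous_const)

lemma smul_mem_decayCone {x v : E} {μ c : ℝ} (hc : 0 < c) (hv : v ∈ decayCone x μ) :
    c • v ∈ decayCone x μ := by
  change μ * ‖c • v‖ < ⟪c • v, x⟫
  rw [real_inner_smul_left, norm_smul, Real.norm_of_nonneg hc.le, mul_left_comm]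
  exact mul_lt_mul_of_pos_left hv hc

lemma mem_decayCone_of_lt_inner {x r : E} {μ : ℝ} (hr : r ≠ 0) (h : μ < ⟪‖r‖⁻¹ • r, x⟫) :
    r ∈ decayCone x μ := by
  have hr' : 0 < ‖r‖ := norm_pos_iff.mpr hr
  rw [real_inner_smul_left, lt_inv_mul_iff₀ hr', mul_comm] at h
  exact h

lemma exists_forall_mul_exp_neg_le {C δ ε : ℝ} (hδ : 0 < δ) (hε : 0 < ε) :
    ∃ R, ∀ t ≥ R, C * Real.exp (-(δ * t)) ≤ ε := by
  have h : Tendsto (fun t => C * Real.exp (-(δ * t))) atTop (𝓝 (C * 0)) :=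
    (Real.tendsto_exp_neg_atTop_nhds_zero.comp (tendsto_id.const_mul_atTop hδ)).const_mul C
  rw [mul_zero] at h
  exact eventually_atTop.mp (h.eventually (ge_mem_nhds hε))

lemma exists_mul_exp_neg_inner_le_of_mem_decayCone (x : E) {lam μ C ε : ℝ} (hlam : lam < μ)
    (hC : 0 ≤ C) (hε : 0 < ε) :
    ∃ R, ∀ v ∈ decayCone x μ, R ≤ ‖v‖ →
      C * Real.exp (-⟪v, x⟫) ≤ ε * Real.exp (-lam * ‖v‖) := by
  obtain ⟨R, hR⟩ := exists_forall_mul_exp_neg_le (C := C) (sub_pos.mpr hlam) hε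
  refine ⟨R, fun v hv hvR => ?_⟩
  calc C * Real.exp (-⟪v, x⟫) ≤ C * Real.exp (-(μ * ‖v‖)) := by
        gcongr; exact hv.le
    _ = C * Real.exp (-((μ - lam) * ‖v‖)) * Real.exp (-lam * ‖v‖) := by
        rw [mul_assoc, ← Real.exp_add]; ring_nf
    _ ≤ ε * Real.exp (-lam * ‖v‖) := by
        gcongr; exact hR _ hvR

end Cone

theorem laurent_coefficient_exponential_decay_general (d : ℕ)
    (B : Set (EuclideanSpace ℝ (Fin (d + 1))))
    (F : (Fin (d + 1) → ℂ) → ℂ)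
    (a : (Fin (d + 1) → ℤ) → ℂ)
    (hbdd : ∀ u ∈ B, ∃ C : ℝ, ∀ y : Fin (d + 1) → ℝ,
      ‖F (fun i => Complex.exp ((u i : ℂ) + Complex.I * (y i : ℂ)))‖ ≤ C)
    (hCauchy : ∀ u ∈ B, ∀ r : Fin (d + 1) → ℤ,
      a r = (2 * Real.pi : ℂ) ^ (-(d + 1 : ℤ)) *
        Complex.exp (-(∑ i, (r i : ℂ) * (u i : ℂ))) *
        ∫ y in Set.univ.pi fun _ : Fin (d + 1) => Set.Ioc (0 : ℝ) (2 * Real.pi),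
          Complex.exp (-Complex.I * ∑ i, (r i : ℂ) * (y i : ℂ)) *
            F (fun i => Complex.exp ((u i : ℂ) + Complex.I * (y i : ℂ))))
    (r : EuclideanSpace ℝ (Fin (d + 1))) (hr : r ≠ 0)
    (lam' : ℝ) (hlam : ∃ x ∈ B, lam' < ⟪‖r‖⁻¹ • r, x⟫) :
    ∃ K : Set (EuclideanSpace ℝ (Fin (d + 1))), IsOpen K ∧ r ∈ K ∧
      (∀ c : ℝ, 0 < c → ∀ x ∈ K, c • x ∈ K) ∧
      ∀ ε > (0 : ℝ), ∃ R : ℝ, ∀ r' : Fin (d + 1) → ℤ,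
        ((WithLp.equiv 2 (Fin (d + 1) → ℝ)).symm fun i => (r' i : ℝ)) ∈ K →
        R ≤ ‖(WithLp.equiv 2 (Fin (d + 1) → ℝ)).symm fun i => (r' i : ℝ)‖ →
        ‖a r'‖ ≤ ε * Real.exp (-lam' *
          ‖(WithLp.equiv 2 (Fin (d + 1) → ℝ)).symm fun i => (r' i : ℝ)‖) := by
  obtain ⟨x, hxB, hx⟩ := hlam
  obtain ⟨C, hC⟩ := hbdd x hxB
  have hC0 : 0 ≤ C := (norm_nonneg _).trans (hC 0)
  have hcoeff (r' : Fin (d + 1) → ℤ) : ‖a r'‖ ≤ C * Real.exp (-∑ i, (r' i : ℝ) * x i) :=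
    norm_le_of_eq_cauchy_integral r' hC (by rw [hCauchy x hxB r']; simp)
  obtain ⟨μ, hlam'μ, hμr⟩ := exists_between hx
  refine ⟨decayCone x μ, isOpen_decayCone x μ, mem_decayCone_of_lt_inner hr hμr,
    fun c hc v hv => smul_mem_decayCone hc hv, fun ε hε => ?_⟩
  obtain ⟨R, hR⟩ := exists_mul_exp_neg_inner_le_of_mem_decayCone x hlam'μ hC0 hε
  refine ⟨R, fun r' hr'K hr'R => (hcoeff r').trans ?_⟩
  have hinner : ⟪(WithLp.equiv 2 (Fin (d + 1) → ℝ)).symm fun i => (r' i : ℝ), x⟫ =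
      ∑ i, (r' i : ℝ) * x i := by
    simp [PiLp.inner_apply, mul_comm]
  simpa only [hinner] using hR _ hr'K hr'R

/-- if the Laurent coefficients `a r` of `F` are given by Cauchy's integral
formula over tori `Log⁻¹{u}`, `u` in an open convex set `B₀`, with `F` bounded on each
such torus, and `λ' < sup { r̂·x : x ∈ B₀ }`, then `|a r'| = o(exp(−λ'|r'|))` uniformly
as `r' → ∞` in some open cone containing `r`. -/
theorem laurent_coefficient_exponential_decay (d : ℕ)
    (B : Set (EuclideanSpace ℝ (Fin (d + 1)))) (hBo : IsOpen B) (hBc : Convex ℝ B)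
    (F : (Fin (d + 1) → ℂ) → ℂ)
    (a : (Fin (d + 1) → ℤ) → ℂ)
    (hbdd : ∀ u ∈ B, ∃ C : ℝ, ∀ y : Fin (d + 1) → ℝ,
      ‖F (fun i => Complex.exp ((u i : ℂ) + Complex.I * (y i : ℂ)))‖ ≤ C)
    (hCauchy : ∀ u ∈ B, ∀ r : Fin (d + 1) → ℤ,
      a r = (2 * Real.pi : ℂ) ^ (-(d + 1 : ℤ)) *
        Complex.exp (-(∑ i, (r i : ℂ) * (u i : ℂ))) *
        ∫ y in Set.univ.pi fun _ : Fin (d + 1) => Set.Ioc (0 : ℝ) (2 * Real.pi),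
          Complex.exp (-Complex.I * ∑ i, (r i : ℂ) * (y i : ℂ)) *
            F (fun i => Complex.exp ((u i : ℂ) + Complex.I * (y i : ℂ))))
    (r : EuclideanSpace ℝ (Fin (d + 1))) (hr : r ≠ 0)
    (lam' : ℝ) (hlam : ∃ x ∈ B, lam' < ⟪‖r‖⁻¹ • r, x⟫) :
    ∃ K : Set (EuclideanSpace ℝ (Fin (d + 1))), IsOpen K ∧ r ∈ K ∧
      (∀ c : ℝ, 0 < c → ∀ x ∈ K, c • x ∈ K) ∧
      ∀ ε > (0 : ℝ), ∃ R : ℝ, ∀ r' : Fin (d + 1) → ℤ,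
        ((WithLp.equiv 2 (Fin (d + 1) → ℝ)).symm fun i => (r' i : ℝ)) ∈ K →
        R ≤ ‖(WithLp.equiv 2 (Fin (d + 1) → ℝ)).symm fun i => (r' i : ℝ)‖ →
        ‖a r'‖ ≤ ε * Real.exp (-lam' *
          ‖(WithLp.equiv 2 (Fin (d + 1) → ℝ)).symm fun i => (r' i : ℝ)‖) :=
  laurent_coefficient_exponential_decay_general d B F a hbdd hCauchy r hr lam' hlam
end

section
/- For the quantum random walk with unitary matrix S(t), 0 < t < 1, the denominator H(x,y,z) = det(I − z M(x,y) S(t)) (with denominators cleared) has nonvanishing gradient at every point of the unit torus T₃ in ℂ³ on which H vanishes; hence 𝒱₁ = {H=0} ∩ T₃ is a smooth surface. -/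
/-- The denominator polynomial of the S(t) quantum random walk (denominators cleared). -/
noncomputable def HS (t : ℝ) (x y z : ℂ) : ℂ :=
  (x ^ 2 * y ^ 2 + y ^ 2 - x ^ 2 - 1 + 2 * x * y * z ^ 2) * z ^ 2 - 2 * x * y -
    (Real.sqrt (2 * t) : ℂ) * z *
      (x * y ^ 2 - y - x + z ^ 2 * y - z ^ 2 * x + z ^ 2 * x * y ^ 2 + z ^ 2 * x ^ 2 * y -
        x ^ 2 * y)

private lemma deriv_quartic (a b c d e v : ℂ) :
    deriv (fun w : ℂ => a*w^4 + b*w^3 + c*w^2 + d*w + e) v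
      = 4*a*v^3 + 3*b*v^2 + 2*c*v + d := by
  have h : HasDerivAt (fun w : ℂ => a*w^4 + b*w^3 + c*w^2 + d*w + e)
      (a*((4:ℕ)*v^3) + b*((3:ℕ)*v^2) + c*((2:ℕ)*v^1) + d*1) v := by
    exact (((((hasDerivAt_pow 4 v).const_mul a).add ((hasDerivAt_pow 3 v).const_mul b)).add
      ((hasDerivAt_pow 2 v).const_mul c)).add ((hasDerivAt_id v).const_mul d)).add_const e
  rw [h.deriv]; push_cast; ring

private lemma main_alg (s x y z : ℂ) (hx0 : x ≠ 0) (hy0 : y ≠ 0) (hz0 : z ≠ 0)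
    (hs0 : s ≠ 0) (h2s : s ^ 2 - 2 ≠ 0)
    (hH : (x ^ 2 * y ^ 2 + y ^ 2 - x ^ 2 - 1 + 2 * x * y * z ^ 2) * z ^ 2 - 2 * x * y - s * z * (x * y ^ 2 - y - x + z ^ 2 * y - z ^ 2 * x + z ^ 2 * x * y ^ 2 + z ^ 2 * x ^ 2 * y - x ^ 2 * y) = 0)
    (h1 : 2*((y^2-1)*z^2 - s*y*z*(z^2-1))*x + (2*y*(z^4-1) - s*z*(y^2-1)*(z^2+1)) = 0)
    (h2 : 2*((x^2+1)*z^2 - s*x*z*(z^2+1))*y + (2*x*(z^4-1) - s*z*(x^2+1)*(z^2-1)) = 0)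
    (h3 : 8*x*y*z^3 - 3*s*(y-x+x*y^2+x^2*y)*z^2 + 2*(x^2+1)*(y^2-1)*z - s*(x*y^2-x^2*y-x-y) = 0) : False := by
  have h2s' : (2:ℂ) - s^2 ≠ 0 := fun h => h2s (by linear_combination -h)
  have hD2 : ((x^2+1)*z^2 - s*x*z*(z^2+1)) * (y^2+1) = 0 := by linear_combination y*h2 - hH
  have hD1 : ((y^2-1)*z^2 - s*y*z*(z^2-1)) * (x^2-1) = 0 := by linear_combination x*h1 - hH
  have hQg : 4*x*y*(z^4+1) - s*(y-x+x*y^2+x^2*y)*z^3 + s*(x*y^2-x^2*y-x-y)*z = 0 := by linear_combination z*h3 - 2*hH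
  rcases mul_eq_zero.mp hD2 with hAp | hy2'
  · -- Case A : A' = 0
    have hBy : (2*x*(z^4-1) - s*z*(x^2+1)*(z^2-1)) * y = 0 := by linear_combination hH - (y^2-1)*hAp
    have hBp : (2*x*(z^4-1) - s*z*(x^2+1)*(z^2-1)) = 0 := (mul_eq_zero.mp hBy).resolve_right hy0
    have hz4 : x*z*((2:ℂ)-s^2)*((z^2-1)*(z^2+1)) = 0 := by
      linear_combination z*hBp + s*(z^2-1)*hAp
    have hz4' : (z^2-1)*(z^2+1) = 0 :=
      (mul_eq_zero.mp hz4).resolve_left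
        (mul_ne_zero (mul_ne_zero hx0 hz0) h2s')
    have hfin : x*y*((2:ℂ)-s^2) = 0 := by
      rcases mul_eq_zero.mp hz4' with hz2 | hz2
      · have hz2' : z^2 = 1 := by linear_combination hz2
        linear_combination (1/4 : ℂ)*hQg + (s*y*z/2)*hAp + ((1/4 : ℂ)*( - x^2*y*z*s + x*y^2*z*s + 2*x*y*z^2*s^2 - 4*x*y*z^2 + 4*x*y*s^2 - 4*x*y - x*z*s - y*z*s))*hz2'
      · have hz2' : z^2 = -1 := by linear_combination hz2
        have hx2m : x^2 = -1 := by linear_combination -hAp + (x^2 - x*z*s + 1)*hz2'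
        have hA : ((y^2-1)*z^2 - s*y*z*(z^2-1)) = 0 := by
          linear_combination (-1/2 : ℂ)*hD1 + ((1/2)*y^2*z^2 - (1/2)*y*z^3*s + (1/2)*y*z*s - (1/2)*z^2)*hx2m
        have hyz : y^2 - 1 - 2*s*y*z = 0 := by linear_combination -hA + (y^2 - y*z*s - 1)*hz2'
        linear_combination (1/4 : ℂ)*hQg - (s*x*z/2)*hyz + ((1/4)*x^2*y*z*s + (1/4)*x*y^2*z*s - x*y*z^2 - x*y*s^2 + x*y - (1/4)*x*z*s + (1/4)*y*z*s)*hz2'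
    exact (mul_ne_zero (mul_ne_zero hx0 hy0) h2s') hfin
  · -- Case B : y² = -1
    have hy2 : y^2 = -1 := by linear_combination hy2'
    rcases mul_eq_zero.mp hD1 with hA | hx2'
    · -- B-1
      have hBx : (2*y*(z^4-1) - s*z*(y^2-1)*(z^2+1)) * x = 0 := by linear_combination hH - (x^2+1)*hA
      have hB : (2*y*(z^4-1) - s*z*(y^2-1)*(z^2+1)) = 0 := (mul_eq_zero.mp hBx).resolve_right hx0
      have ht12 : 2*z^2*((z^2+1)*(s^2-2)) = 0 := by
        linear_combination s*z*hB + 2*(z^2+1)*hA - (z^2*(z^2+1)*(2-s^2))*hy2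
      have hz21 : (z^2+1)*(s^2-2) = 0 :=
        (mul_eq_zero.mp ht12).resolve_left
          (mul_ne_zero two_ne_zero (pow_ne_zero 2 hz0))
      have hz2c : z^2+1 = 0 := (mul_eq_zero.mp hz21).resolve_right h2s
      have hz2' : z^2 = -1 := by linear_combination hz2c
      have hyz : y^2 - 1 - 2*s*y*z = 0 := by linear_combination -hA + (y^2 - y*z*s - 1)*hz2'
      have hfin : x*y*((2:ℂ)-s^2) = 0 := by
        linear_combination (1/4 : ℂ)*hQg - (s*x*z/2)*hyz + ((1/4)*x^2*y*z*s + (1/4)*x*y^2*z*s - x*y*z^2 - x*y*s^2 + x*y - (1/4)*x*z*s + (1/4)*y*z*s)*hz2'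
      exact (mul_ne_zero (mul_ne_zero hx0 hy0) h2s') hfin
    · -- B-2 : x² = 1, y² = -1
      have hx2 : x^2 = 1 := by linear_combination hx2'
      have hxy : x*y ≠ 0 := mul_ne_zero hx0 hy0
      have hP : x*y*z^4 - s*(y-x)*z^3 - 2*z^2 + s*(x+y)*z - x*y = 0 := by
        linear_combination (1/2 : ℂ)*hH + ( - (1/2)*y^2*z^2 + (1/2)*y*z^3*s - (1/2)*y*z*s + (1/2)*z^2)*hx2 + ((1/2)*x*z^3*s + (1/2)*x*z*s - z^2)*hy2
      have hQr : 2*x*y*(z^4+1) - s*(y-x)*z^3 - s*(x+y)*z = 0 := by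
        linear_combination (1/2 : ℂ)*hQg + ((1/2)*y*z^3*s + (1/2)*y*z*s)*hx2 + ((1/2)*x*z^3*s - (1/2)*x*z*s)*hy2
      have hE1 : (-s*(z^2+1)^3 + 4*x*z*(z^2+1)^2 - 2*s*z^2*(z^2+1) + 4*(s^2-2)*x*z^3) = 0 := by
        have h : x*y*(-s*(z^2+1)^3 + 4*x*z*(z^2+1)^2 - 2*s*z^2*(z^2+1) + 4*(s^2-2)*x*z^3) = 0 := by
          linear_combination (2*x*z - s*(z^2+1))*hQr + s*(z^2-1)*hP + (4*y*z^3*s^2 - 2*z^4*s + 2*z^2*s)*hx2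
        exact (mul_eq_zero.mp h).resolve_left hxy
      have hE2 : ((z^2+1)^4 - 2*s*x*z*(z^2+1)^3 + (2*s^2-4)*z^2*(z^2+1)^2 + 4*s*x*z^3*(z^2+1) + (4-4*s^2)*z^4) = 0 := by
        have h : x*y*((z^2+1)^4 - 2*s*x*z*(z^2+1)^3 + (2*s^2-4)*z^2*(z^2+1)^2 + 4*s*x*z^3*(z^2+1) + (4-4*s^2)*z^4) = 0 := by
          linear_combination ((z^2-1)*(z^2+1-s*x*z) - y*z*(2*x*z - s*(z^2+1)))*hP + (2*y^2*z^6 - 2*y^2*z^2 - y*z^7*s - y*z^5*s - y*z^3*s - y*z*s + z^6*s^2 - z^2*s^2)*hx2 + ( - x*z^7*s - 3*x*z^5*s + 3*x*z^3*s + x*z*s + z^6*s^2 + 2*z^6 - z^2*s^2 - 2*z^2)*hy2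
        exact (mul_eq_zero.mp h).resolve_left hxy
      have hR : s^2*(s^2-2)^2*(s^2-1)*z^6 = 0 := by
        linear_combination ((1/8)*x*z^3*s^5 - (7/8)*x*z^3*s^3 + x*z^3*s + (1/8)*x*z*s^5 - (7/8)*x*z*s^3 + x*z*s + (1/4)*z^4*s^4 - (3/8)*z^4*s^2 + (5/4)*z^2*s^4 - (13/4)*z^2*s^2 + 2*z^2 + (1/4)*s^4 - (3/8)*s^2)*hE2 + ( - (3/8)*x*z^5*s^4 + (7/8)*x*z^5*s^2 - (1/2)*x*z^5 + (1/4)*x*z^3*s^6 - (3/4)*x*z^3*s^4 + (1/2)*x*z^3*s^2 - (3/8)*x*z*s^4 + (7/8)*x*z*s^2 - (1/2)*x*z + (1/4)*z^6*s^3 - (3/8)*z^6*s + (1/4)*z^4*s^5 - (1/2)*z^4*s^3 + (1/8)*z^4*s + (1/4)*z^2*s^5 - (1/2)*z^2*s^3 + (1/8)*z^2*s + (1/4)*s^3 - (3/8)*s)*hE1 + (-1)*( - (1/4)*z^10*s^6 + (1/4)*z^10*s^4 + (3/2)*z^10*s^2 - 2*z^10 - z^8*s^6 + 4*z^8*s^4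 - 4*z^8*s^2 + z^6*s^8 - (7/2)*z^6*s^6 + (5/2)*z^6*s^4 + 3*z^6*s^2 - 4*z^6 - z^4*s^6 + 4*z^4*s^4 - 4*z^4*s^2 - (1/4)*z^2*s^6 + (1/4)*z^2*s^4 + (3/2)*z^2*s^2 - 2*z^2)*hx2
      have hs1 : s^2 = 1 := by
        have ha := (mul_eq_zero.mp hR).resolve_right (pow_ne_zero 6 hz0)
        have hb := (mul_eq_zero.mp ha).resolve_left
          (mul_ne_zero (pow_ne_zero 2 hs0) (pow_ne_zero 2 h2s))
        linear_combination hb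
      by_cases hzx : z = s*x
      · have h2xy : (2:ℂ)*(x*y) = 0 := by
          linear_combination hQr + ( - 2*x^4*y*s^3 - 2*x^3*y*z*s^2 - x^3*s^3 - 2*x^2*y*z^2*s + x^2*y*s^3 - x^2*z*s^2 - 2*x*y*z^3 + x*y*z*s^2 - x*z^2*s + x*s + y*z^2*s + y*s)*hzx + ( - 2*x^5*y*s^2 - 2*x^5*y - x^4*s^2 - x^4 + x^3*y*s^2 + x^3*y + x^2 + x*y)*hs1 + ( - 2*x^3*y - x^2 - x*y)*hx2
        exact hxy ((mul_eq_zero.mp h2xy).resolve_left two_ne_zero)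
      · have hzx2 : (z - s*x)^2 ≠ 0 := pow_ne_zero 2 (sub_ne_zero.mpr hzx)
        have hK : (z^2+1)^2 - 2*s*x*z*(z^2+1) - 2*z^2 = 0 := by
          have h : (z-s*x)^2*((z^2+1)^2 - 2*s*x*z*(z^2+1) - 2*z^2) = 0 := by
            linear_combination (-s)*hE1 + ( - 2*x^3*z^3*s - 2*x^3*z*s + 5*x^2*z^4 + 4*x^2*z^2 + x^2 + 4*x*z^3*s - z^6 - 5*z^4 - 5*z^2 - 1)*hs1 + ( - 2*x*z^3*s - 2*x*z*s + 5*z^4 + 4*z^2 + 1)*hx2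
          exact (mul_eq_zero.mp h).resolve_left hzx2
        have h24 : (z^2+1)*(z^4+1) = 0 := by
          have h : (z-s*x)^2*((z^2+1)*(z^4+1)) = 0 := by
            linear_combination hE2 + (-1)*( - x^2*z^6 - x^2*z^4 - x^2*z^2 - x^2 + 2*z^6 + 2*z^2)*hs1 + (-1)*( - z^6 - z^4 - z^2 - 1)*hx2
          exact (mul_eq_zero.mp h).resolve_left hzx2
        rcases mul_eq_zero.mp h24 with hz2c | hz4c
        · have h20 : (2:ℂ) = 0 := by linear_combination hK - (z^2-1-2*s*x*z)*hz2c
          norm_num at h20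
        · have hw : s*x*z*(z^2+1) = 0 := by
            linear_combination (1/2 : ℂ)*hz4c - (1/2 : ℂ)*hK
          have hz2c : z^2+1 = 0 :=
            (mul_eq_zero.mp hw).resolve_left
              (mul_ne_zero (mul_ne_zero hs0 hx0) hz0)
          have h20 : (2:ℂ) = 0 := by linear_combination hz4c - (z^2-1)*hz2c
          norm_num at h20

/-- for 0 < t < 1, the gradient of the S(t) denominator H does not vanish
at any point of the unit torus T₃ where H vanishes. -/
theorem St_variety_smooth_on_torus (t : ℝ) (ht0 : 0 < t) (ht1 : t < 1)
    (x y z : ℂ) (hx : ‖x‖ = 1) (hy : ‖y‖ = 1) (hz : ‖z‖ = 1)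
    (hH : HS t x y z = 0) :
    ¬ (deriv (fun w => HS t w y z) x = 0 ∧ deriv (fun w => HS t x w z) y = 0 ∧
        deriv (fun w => HS t x y w) z = 0) := by
  rintro ⟨h1, h2, h3⟩
  have hx0 : x ≠ 0 := fun h => by simp [h] at hx
  have hy0 : y ≠ 0 := fun h => by simp [h] at hy
  have hz0 : z ≠ 0 := fun h => by simp [h] at hz
  set s : ℂ := (Real.sqrt (2 * t) : ℂ) with hsdef
  have hs0 : s ≠ 0 := by
    rw [hsdef]
    exact Complex.ofReal_ne_zero.mpr (Real.sqrt_ne_zero'.mpr (by linarith))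
  have hs2 : s ^ 2 = ((2 * t : ℝ) : ℂ) := by
    rw [hsdef]
    exact_mod_cast congrArg (fun r : ℝ => (r : ℂ)) (Real.sq_sqrt (by linarith : (0:ℝ) ≤ 2 * t))
  have h2s : s ^ 2 - 2 ≠ 0 := by
    rw [hs2]
    intro h
    have h' : ((2 * t - 2 : ℝ) : ℂ) = 0 := by push_cast at h ⊢; linear_combination h
    have := Complex.ofReal_eq_zero.mp h'
    linarith
  simp only [HS] at hH
  rw [← hsdef] at hH
  have hfx : (fun w => HS t w y z)
      = (fun w : ℂ => 0*w^4 + 0*w^3 + ((y^2-1)*z^2 - s*y*z*(z^2-1))*w^2 + (2*y*(z^4-1) - s*z*(y^2-1)*(z^2+1))*w + ((y^2-1)*z^2 - s*y*z*(z^2-1))) := by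
    funext w
    simp only [HS]
    rw [← hsdef]
    ring
  have hfy : (fun w => HS t x w z)
      = (fun w : ℂ => 0*w^4 + 0*w^3 + ((x^2+1)*z^2 - s*x*z*(z^2+1))*w^2 + (2*x*(z^4-1) - s*z*(x^2+1)*(z^2-1))*w + (-((x^2+1)*z^2 - s*x*z*(z^2+1)))) := by
    funext w
    simp only [HS]
    rw [← hsdef]
    ring
  have hfz : (fun w => HS t x y w)
      = (fun w : ℂ => (2*x*y)*w^4 + (-s*(y-x+x*y^2+x^2*y))*w^3 + ((x^2+1)*(y^2-1))*w^2
          + (-s*(x*y^2-x^2*y-x-y))*w + (-(2*x*y))) := by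
    funext w
    simp only [HS]
    rw [← hsdef]
    ring
  rw [hfx, deriv_quartic] at h1
  rw [hfy, deriv_quartic] at h2
  rw [hfz, deriv_quartic] at h3
  exact main_alg s x y z hx0 hy0 hz0 hs0 h2s hH
    (by linear_combination h1) (by linear_combination h2) (by linear_combination h3)
end

section
/- For the S(t) quantum random walk with 0 < t < 1, a point (e^{iα}, e^{iβ}, e^{iγ}) lies on 𝒱₁ if and only if 2 sin γ cos γ − √(2t)(sin β cos γ + cos α sin γ) + cos α sin β = 0. -/
/-- for 0 < t < 1, the point (e^{iα}, e^{iβ}, e^{iγ}) lies on 𝒱₁ (i.e. the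
S(t) denominator vanishes there) if and only if
2 sin γ cos γ − √(2t)(sin β cos γ + cos α sin γ) + cos α sin β = 0. -/
theorem St_torus_points_trig (t α β γ : ℝ) (ht0 : 0 < t) (ht1 : t < 1) :
    HS t (Complex.exp (Complex.I * α)) (Complex.exp (Complex.I * β))
        (Complex.exp (Complex.I * γ)) = 0 ↔
      2 * Real.sin γ * Real.cos γ -
          Real.sqrt (2 * t) * (Real.sin β * Real.cos γ + Real.cos α * Real.sin γ) +
          Real.cos α * Real.sin β = 0 := by
  set x := Complex.exp (Complex.I * α) with hx
  set y := Complex.exp (Complex.I * β) with hy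
  set z := Complex.exp (Complex.I * γ) with hz
  have hxne : x ≠ 0 := Complex.exp_ne_zero _
  have hyne : y ≠ 0 := Complex.exp_ne_zero _
  have hzne : z ≠ 0 := Complex.exp_ne_zero _
  -- basic exponential facts
  have hx' : Complex.exp ((α : ℂ) * Complex.I) = x := by rw [hx, mul_comm]
  have hy' : Complex.exp ((β : ℂ) * Complex.I) = y := by rw [hy, mul_comm]
  have hz' : Complex.exp ((γ : ℂ) * Complex.I) = z := by rw [hz, mul_comm]
  have hxx : x * Complex.exp ((-(α : ℂ) * Complex.I)) = 1 := by
    rw [hx, mul_comm Complex.I (α : ℂ), ← Complex.exp_add]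
    norm_num [Complex.exp_zero]
  have hyy : y * Complex.exp ((-(β : ℂ) * Complex.I)) = 1 := by
    rw [hy, mul_comm Complex.I (β : ℂ), ← Complex.exp_add]
    norm_num [Complex.exp_zero]
  have hzz : z * Complex.exp ((-(γ : ℂ) * Complex.I)) = 1 := by
    rw [hz, mul_comm Complex.I (γ : ℂ), ← Complex.exp_add]
    norm_num [Complex.exp_zero]
  -- cleared-denominator sine and cosine identities
  have h1 : (Complex.sin (γ : ℂ)) * (2 * Complex.I * z) = z ^ 2 - 1 := by
    rw [Complex.sin]
    linear_combination (z * Complex.exp ((-(γ : ℂ) * Complex.I)) - z *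
        Complex.exp ((γ : ℂ) * Complex.I)) * Complex.I_mul_I - hzz + z * hz'
  have h2 : (Complex.cos (γ : ℂ)) * (2 * z) = z ^ 2 + 1 := by
    rw [Complex.cos]
    linear_combination hzz + z * hz'
  have h3 : (Complex.sin (β : ℂ)) * (2 * Complex.I * y) = y ^ 2 - 1 := by
    rw [Complex.sin]
    linear_combination (y * Complex.exp ((-(β : ℂ) * Complex.I)) - y *
        Complex.exp ((β : ℂ) * Complex.I)) * Complex.I_mul_I - hyy + y * hy'
  have h4 : (Complex.cos (α : ℂ)) * (2 * x) = x ^ 2 + 1 := by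
    rw [Complex.cos]
    linear_combination hxx + x * hx'
  -- the key factorization
  have key : HS t x y z = 4 * Complex.I * x * y * z ^ 2 *
      ((2 * Real.sin γ * Real.cos γ -
          Real.sqrt (2 * t) * (Real.sin β * Real.cos γ + Real.cos α * Real.sin γ) +
          Real.cos α * Real.sin β : ℝ) : ℂ) := by
    unfold HS
    push_cast
    linear_combination
      (-(2 * x * y * (Complex.cos (γ : ℂ) * (2 * z))) +
        (Real.sqrt (2 * t) : ℂ) * y * z * (x ^ 2 + 1)) * h1 +
      (-(2 * x * y * (z ^ 2 - 1)) + (Real.sqrt (2 * t) : ℂ) * x * z * (y ^ 2 - 1)) * h2 +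
      ((Real.sqrt (2 * t) : ℂ) * x * z * (Complex.cos (γ : ℂ) * (2 * z)) -
        z ^ 2 * (x ^ 2 + 1)) * h3 +
      ((Real.sqrt (2 * t) : ℂ) * y * z * (Complex.sin (γ : ℂ) * (2 * Complex.I * z)) -
        z ^ 2 * (Complex.sin (β : ℂ) * (2 * Complex.I * y))) * h4
  rw [key]
  have hfac : (4 : ℂ) * Complex.I * x * y * z ^ 2 ≠ 0 := by
    simp [hxne, hyne, hzne, Complex.I_ne_zero]
  rw [mul_eq_zero, or_iff_right hfac, Complex.ofReal_eq_zero]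
end

section
/- For the S(t) walk, 0 < t < 1, the only points (α,β,γ) on 𝒱₁ with γ = π/4 are (α,β) = (π, π/2) and (0, 3π/2). In particular, 𝒱₁ meets the torus {γ = π/4} in exactly two points. -/
open scoped Real

lemma exp_I_eq_iff (θ ψ : ℝ) :
    Complex.exp (Complex.I * θ) = Complex.exp (Complex.I * ψ) ↔
      (Real.cos θ = Real.cos ψ ∧ Real.sin θ = Real.sin ψ) := by
  rw [mul_comm Complex.I (θ:ℂ), mul_comm Complex.I (ψ:ℂ), Complex.exp_mul_I,
    Complex.exp_mul_I]
  simp [← Complex.ofReal_cos, ← Complex.ofReal_sin, Complex.ext_iff]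

/-- for 0 < t < 1, the only points (α,β,γ) on 𝒱₁ (given in angular
coordinates by L(α,β,γ) = 0) with γ = π/4 are (α,β) = (π, π/2) and (0, 3π/2)
(as points of the flat torus). -/
theorem St_gamma_pi_div_four_points (t α β : ℝ) (ht0 : 0 < t) (ht1 : t < 1) :
    (2 * Real.sin (π / 4) * Real.cos (π / 4) -
        Real.sqrt (2 * t) *
          (Real.sin β * Real.cos (π / 4) + Real.cos α * Real.sin (π / 4)) +
        Real.cos α * Real.sin β = 0) ↔
      ((Complex.exp (Complex.I * α) = Complex.exp (Complex.I * (π : ℝ)) ∧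
          Complex.exp (Complex.I * β) = Complex.exp (Complex.I * (π / 2 : ℝ))) ∨
        (Complex.exp (Complex.I * α) = Complex.exp (Complex.I * (0 : ℝ)) ∧
          Complex.exp (Complex.I * β) = Complex.exp (Complex.I * (3 * π / 2 : ℝ)))) := by
  have h2 : Real.sqrt (2 * t) = Real.sqrt 2 * Real.sqrt t := Real.sqrt_mul (by norm_num) t
  set s := Real.sqrt t with hs
  have hs0 : 0 < s := Real.sqrt_pos.mpr ht0
  have hs1 : s < 1 := by
    rw [hs, show (1:ℝ) = Real.sqrt 1 by simp]
    exact Real.sqrt_lt_sqrt (le_of_lt ht0) ht1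
  have hsq2 : Real.sqrt 2 * Real.sqrt 2 = 2 := Real.mul_self_sqrt (by norm_num)
  set c := Real.cos α with hc
  set b := Real.sin β with hb
  have hc1 : c^2 ≤ 1 := by
    have := Real.neg_one_le_cos α; have := Real.cos_le_one α; nlinarith
  have hb1 : b^2 ≤ 1 := by
    have := Real.neg_one_le_sin β; have := Real.sin_le_one β; nlinarith
  have key : (2 * Real.sin (π / 4) * Real.cos (π / 4) -
        Real.sqrt (2 * t) * (b * Real.cos (π / 4) + c * Real.sin (π / 4)) +
        c * b = 0) ↔ (1 - s * (b + c) + c * b = 0) := by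
    rw [Real.sin_pi_div_four, Real.cos_pi_div_four, h2]
    have e : 2 * (Real.sqrt 2 / 2) * (Real.sqrt 2 / 2) -
        Real.sqrt 2 * s * (b * (Real.sqrt 2 / 2) + c * (Real.sqrt 2 / 2)) + c * b =
        1 - s * (b + c) + c * b := by
      linear_combination ((1 - s * (b + c)) / 2) * hsq2
    rw [e]
  rw [key]
  have hA : Complex.exp (Complex.I * α) = Complex.exp (Complex.I * (π : ℝ)) ↔ c = -1 := by
    rw [exp_I_eq_iff, Real.cos_pi, Real.sin_pi]
    constructor
    · exact fun h => h.1
    · intro h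
      refine ⟨h, ?_⟩
      have := Real.sin_sq_add_cos_sq α
      nlinarith
  have hA0 : Complex.exp (Complex.I * α) = Complex.exp (Complex.I * (0 : ℝ)) ↔ c = 1 := by
    rw [exp_I_eq_iff, Real.cos_zero, Real.sin_zero]
    constructor
    · exact fun h => h.1
    · intro h
      refine ⟨h, ?_⟩
      have := Real.sin_sq_add_cos_sq α
      nlinarith
  have hB : Complex.exp (Complex.I * β) = Complex.exp (Complex.I * (π / 2 : ℝ)) ↔ b = 1 := by
    rw [exp_I_eq_iff, Real.cos_pi_div_two, Real.sin_pi_div_two]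
    constructor
    · exact fun h => h.2
    · intro h
      refine ⟨?_, h⟩
      have := Real.sin_sq_add_cos_sq β
      nlinarith
  have hB2 : Complex.exp (Complex.I * β) = Complex.exp (Complex.I * (3 * π / 2 : ℝ)) ↔ b = -1 := by
    rw [exp_I_eq_iff, show (3 * π / 2 : ℝ) = π + π / 2 by ring, Real.cos_add, Real.sin_add]
    simp only [Real.cos_pi, Real.sin_pi, Real.cos_pi_div_two, Real.sin_pi_div_two]
    constructor
    · intro h
      have := h.2; linarith [this]
    · intro h
      have := Real.sin_sq_add_cos_sq β
      constructor
      · nlinarith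
      · nlinarith
  rw [hA, hB, hA0, hB2]
  constructor
  · intro h
    have hcb : c * (b - s) = s * b - 1 := by linear_combination h
    have h3 : (s * b - 1)^2 ≤ (b - s)^2 := by
      rw [← hcb]
      nlinarith [mul_nonneg (by linarith : (0:ℝ) ≤ 1 - c^2) (sq_nonneg (b - s))]
    have hbsq : b^2 = 1 := by
      by_contra hne
      have hblt : b^2 < 1 := lt_of_le_of_ne hb1 hne
      nlinarith [h3, mul_pos (by linarith : (0:ℝ) < 1 - b^2)
        (by nlinarith : (0:ℝ) < 1 - s^2)]
    have hbor : b = 1 ∨ b = -1 := by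
      have h0 : (b - 1) * (b + 1) = 0 := by linear_combination hbsq
      rcases mul_eq_zero.mp h0 with h1 | h1
      · left; linarith
      · right; linarith
    rcases hbor with h1 | h1
    · left
      refine ⟨?_, h1⟩
      have h0 : (1 + c) * (1 - s) = 0 := by linear_combination h + (s - c) * h1
      rcases mul_eq_zero.mp h0 with h4 | h4
      · linarith
      · linarith
    · right
      refine ⟨?_, h1⟩
      have h0 : (1 - c) * (1 + s) = 0 := by linear_combination h + (s - c) * h1
      rcases mul_eq_zero.mp h0 with h4 | h4
      · linarith
      · linarith
  · rintro (⟨hc', hb'⟩ | ⟨hc', hb'⟩) <;> rw [hc', hb'] <;> ring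
end
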